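/- Let N be odd and let Φ = {φ_1, ..., φ_N} be a unit-norm tight frame for 𝔽^M (𝔽 = ℝ or ℂ) that is biangular with frame angles c_1 ≠ c_2. Then Φ is equidistributed, and its multiplicities m_1, m_2 (satisfying m_1 + m_2 = N − 1) are both even. -/

import Mathlib

/-!
For an angle `c`, joining `j ≠ l` whenever `|⟨φ_j, φ_l⟩| = c` defines a simple graph on the
frame vectors, and for a biangular frame the `c₂`-graph is the complement of the `c₁`-graph.
Tightness gives `∑_l |⟨φ_j, φ_l⟩|² = N / M` for every `j`, that is
`d_j c₁² + (N - 1 - d_j) c₂² = N / M - 1` for the `c₁`-degree `d_j`; as `c₁² ≠ c₂²`, `d_j` does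
not depend on `j`. A regular graph on an odd number of vertices has even degree by the
handshake lemma.
-/

open Finset

namespace SimpleGraph

variable {V : Type*} (G : SimpleGraph V)

theorem ncard_neighborSet_eq_degree (v : V) [Fintype (G.neighborSet v)] :
    (G.neighborSet v).ncard = G.degree v := by
  rw [Set.ncard_eq_toFinset_card', ← card_neighborSet_eq_degree, Set.toFinset_card]

variable [Fintype V] [DecidableRel G.Adj]

variable {G} in
theorem IsRegularOfDegree.even_of_odd_card {d : ℕ} (h : G.IsRegularOfDegree d)
    (hodd : Odd (Fintype.card V)) : Even d := by
  have hsum := G.sum_degrees_eq_twice_card_edges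
  simp only [h.degree_eq, sum_const, card_univ, smul_eq_mul] at hsum
  exact (Nat.even_mul.1 (hsum ▸ even_two_mul _)).resolve_left (Nat.not_even_iff_odd.2 hodd)

variable [DecidableEq V]

theorem degree_add_degree_compl (v : V) : G.degree v + Gᶜ.degree v = Fintype.card V - 1 := by
  have := G.degree_lt_card_verts v
  rw [degree_compl]
  omega

theorem sum_eq_add_degree_smul_add_degree_compl_smul {R : Type*} [AddCommMonoid R]
    {f : V → R} {v : V} {a b : R} (ha : ∀ w, G.Adj v w → f w = a)
    (hb : ∀ w, Gᶜ.Adj v w → f w = b) :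
    ∑ w, f w = f v + G.degree v • a + Gᶜ.degree v • b := by
  have hadj : {w ∈ univ.erase v | G.Adj v w} = G.neighborFinset v := by
    ext w; simpa using fun h => (G.ne_of_adj h).symm
  have hnadj : {w ∈ univ.erase v | ¬G.Adj v w} = Gᶜ.neighborFinset v := by
    ext w; simp [compl_adj, ne_comm]
  rw [← add_sum_erase _ _ (mem_univ v), ← sum_filter_add_sum_filter_not _ (G.Adj v), hadj,
    hnadj, sum_congr rfl fun w hw => ha w ((G.mem_neighborFinset v w).1 hw),
    sum_congr rfl fun w hw => hb w ((Gᶜ.mem_neighborFinset v w).1 hw), sum_const, sum_const,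
    card_neighborFinset_eq_degree, card_neighborFinset_eq_degree, add_assoc]

theorem degree_eq_of_degree_mul_add_degree_compl_mul {R : Type*} [Field R] [CharZero R]
    {a b L : R} (hab : a ≠ b) (h : ∀ v, G.degree v * a + Gᶜ.degree v * b = L) (v w : V) :
    G.degree v = G.degree w := by
  have hsum : ∀ u, (G.degree u : R) + Gᶜ.degree u = (Fintype.card V - 1 : ℕ) := fun u => by
    exact_mod_cast G.degree_add_degree_compl u
  have key : ((G.degree v : R) - G.degree w) * (a - b) = 0 := by
    linear_combination h v - h w - b * (hsum v - hsum w)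
  exact_mod_cast sub_eq_zero.1 ((mul_eq_zero.1 key).resolve_right (sub_ne_zero.2 hab))

end SimpleGraph

section Frame

variable (𝕜 : Type*) {E ι : Type*} [RCLike 𝕜] [NormedAddCommGroup E] [InnerProductSpace 𝕜 E]

theorem sum_norm_inner_sq_eq_of_tight [Fintype ι] {φ : ι → E} {a : ℝ}
    (htight : ∀ x, ∑ j, inner 𝕜 (φ j) x • φ j = (a : 𝕜) • x) (x : E) :
    ∑ j, ‖(inner 𝕜 x (φ j) : 𝕜)‖ ^ 2 = a * ‖x‖ ^ 2 := by
  have h := congrArg (inner 𝕜 x) (htight x)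
  simp only [inner_sum, inner_smul_right, ← inner_conj_symm (φ _) x, RCLike.conj_mul,
    inner_self_eq_norm_sq_to_K] at h
  exact_mod_cast h

def angleGraph (φ : ι → E) (c : ℝ) : SimpleGraph ι where
  Adj j l := j ≠ l ∧ ‖(inner 𝕜 (φ j) (φ l) : 𝕜)‖ = c
  symm := ⟨fun _ _ h => ⟨h.1.symm, by rw [norm_inner_symm, h.2]⟩⟩
  loopless := ⟨fun _ h => h.1 rfl⟩

variable {𝕜}

theorem angleGraph_adj {φ : ι → E} {c : ℝ} {j l : ι} :
    (angleGraph 𝕜 φ c).Adj j l ↔ j ≠ l ∧ ‖(inner 𝕜 (φ j) (φ l) : 𝕜)‖ = c :=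
  Iff.rfl

theorem neighborSet_angleGraph (φ : ι → E) (c : ℝ) (j : ι) :
    (angleGraph 𝕜 φ c).neighborSet j = {l | l ≠ j ∧ ‖(inner 𝕜 (φ j) (φ l) : 𝕜)‖ = c} := by
  simp only [SimpleGraph.neighborSet, angleGraph_adj, ne_comm]

theorem compl_angleGraph {φ : ι → E} {c₁ c₂ : ℝ} (hc : c₁ ≠ c₂)
    (hangle : ∀ j l, j ≠ l →
      ‖(inner 𝕜 (φ j) (φ l) : 𝕜)‖ = c₁ ∨ ‖(inner 𝕜 (φ j) (φ l) : 𝕜)‖ = c₂) :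
    (angleGraph 𝕜 φ c₁)ᶜ = angleGraph 𝕜 φ c₂ := by
  ext j l
  simp only [SimpleGraph.compl_adj, angleGraph_adj]
  constructor
  · rintro ⟨hjl, hne⟩
    exact ⟨hjl, (hangle j l hjl).resolve_left fun h => hne ⟨hjl, h⟩⟩
  · rintro ⟨hjl, h₂⟩
    exact ⟨hjl, fun h₁ => hc (h₁.2.symm.trans h₂)⟩

end Frame

theorem biangular_tight_frame_odd_even_multiplicities {𝕜 : Type*} [RCLike 𝕜]
    {M N : ℕ} (hodd : Odd N)
    (φ : Fin N → EuclideanSpace 𝕜 (Fin M))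
    (hunit : ∀ j, ‖φ j‖ = 1)
    (htight : ∀ x : EuclideanSpace 𝕜 (Fin M),
      ∑ j, (inner 𝕜 (φ j) x : 𝕜) • φ j = ((N : 𝕜) / M) • x)
    (c₁ c₂ : ℝ) (hc : c₁ ≠ c₂)
    (hangles : {r : ℝ | ∃ j l, j ≠ l ∧ ‖(inner 𝕜 (φ j) (φ l) : 𝕜)‖ = r} = {c₁, c₂}) :
    ∃ m₁ m₂ : ℕ, m₁ + m₂ = N - 1 ∧ Even m₁ ∧ Even m₂ ∧
      ∀ j, {l | l ≠ j ∧ ‖(inner 𝕜 (φ j) (φ l) : 𝕜)‖ = c₁}.ncard = m₁ ∧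
           {l | l ≠ j ∧ ‖(inner 𝕜 (φ j) (φ l) : 𝕜)‖ = c₂}.ncard = m₂ := by
  classical
  set G := angleGraph 𝕜 φ c₁
  have hcompl : Gᶜ = angleGraph 𝕜 φ c₂ :=
    compl_angleGraph hc fun j l hjl => hangles.subset ⟨j, l, hjl, rfl⟩
  have hnonneg : ∀ c ∈ ({c₁, c₂} : Set ℝ), 0 ≤ c := by
    rw [← hangles]
    rintro _ ⟨j, l, -, rfl⟩
    exact norm_nonneg _
  have hsq : c₁ ^ 2 ≠ c₂ ^ 2 := fun h =>
    hc ((sq_eq_sq₀ (hnonneg c₁ (by simp)) (hnonneg c₂ (by simp))).1 h)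
  have henergy (j : Fin N) : G.degree j * c₁ ^ 2 + Gᶜ.degree j * c₂ ^ 2 = (N / M : ℝ) - 1 := by
    have hsum := sum_norm_inner_sq_eq_of_tight 𝕜 (a := N / M) (by push_cast; exact htight) (φ j)
    rw [G.sum_eq_add_degree_smul_add_degree_compl_smul (fun l h => by rw [h.2])
      (fun l h => by rw [hcompl] at h; rw [h.2])] at hsum
    simp only [inner_self_eq_norm_sq_to_K, hunit, map_one, one_pow, norm_one, nsmul_eq_mul,
      mul_one] at hsum
    linarith
  have j₀ : Fin N := ⟨0, hodd.pos⟩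
  have hreg₁ : G.IsRegularOfDegree (G.degree j₀) := fun j =>
    G.degree_eq_of_degree_mul_add_degree_compl_mul hsq henergy j j₀
  have hreg₂ : Gᶜ.IsRegularOfDegree (Gᶜ.degree j₀) := fun j =>
    (hreg₁.compl j).trans (hreg₁.compl j₀).symm
  refine ⟨G.degree j₀, Gᶜ.degree j₀, by simpa using G.degree_add_degree_compl j₀,
    hreg₁.even_of_odd_card (by simpa), hreg₂.even_of_odd_card (by simpa), fun j => ?_⟩
  rw [← neighborSet_angleGraph, ← neighborSet_angleGraph, ← hcompl,
    SimpleGraph.ncard_neighborSet_eq_degree, SimpleGraph.ncard_neighborSet_eq_degree, hreg₁ j,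
    hreg₂ j]
  exact ⟨rfl, rfl⟩
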